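/- Let F be a formal group law over a commutative ring R. The power series F_Y(X,0) ∈ R[[X]] has constant term 1, hence is invertible in R[[X]]; write ω_F = (F_Y(X,0))^{-1}. Then a power series f ∈ R[[X]] satisfies the invariance condition f(F(X,Y))·F_X(X,Y) = f(X) in R[[X,Y]] if and only if f = f(0)·ω_F, where f(0) is the constant term of f. In particular the set of invariant f is a free R-module of rank 1 generated by ω_F. -/

import Mathlib

/-!
Differentiating associativity `F(F(X,Y),Z) = F(X,F(Y,Z))` with respect to `X` and then setting
`X = 0` gives `g(F(Y,Z)) = F_X(Y,Z) · g(Y)`, where `g(Y) = F_X(0,Y) = F_Y(Y,0)` by commutativity.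
Composing with `ω = g⁻¹` shows that `ω`, and hence every `c · ω`, is invariant. Conversely, setting
`X = 0` in the invariance condition gives `f(Y) · g(Y) = f(0)`, as `F(0,Y) = Y`.

The chain rule for substituting into `F` is checked degree by degree on polynomial truncations
of `F`, where it is the Leibniz rule.
-/


namespace FGL

variable {R : Type*} [CommRing R]

/-- `subst2 F a b` is the substitution `F(a,b)` of the power series `a`, `b`
(with zero constant term) into the two-variable power series `F`. -/
noncomputable def subst2 {σ : Type*} (F : MvPowerSeries (Fin 2) R)
    (a b : MvPowerSeries σ R) : MvPowerSeries σ R :=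
  fun d =>
    ∑ ij ∈ Finset.range ((d.sum fun _ k => k) + 1) ×ˢ
        Finset.range ((d.sum fun _ k => k) + 1),
      MvPowerSeries.coeff (Finsupp.single 0 ij.1 + Finsupp.single 1 ij.2) F *
        MvPowerSeries.coeff d (a ^ ij.1 * b ^ ij.2)

/-- `subst1 f G` is the substitution `f(G)` of the power series `G`
(with zero constant term) into the one-variable power series `f`. -/
noncomputable def subst1 {σ : Type*} (f : PowerSeries R) (G : MvPowerSeries σ R) :
    MvPowerSeries σ R :=
  fun d =>
    ∑ n ∈ Finset.range ((d.sum fun _ k => k) + 1),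
      PowerSeries.coeff n f * MvPowerSeries.coeff d (G ^ n)

/-- Composition `f(g)` of one-variable power series (`g` with zero constant term). -/
noncomputable def pcomp (f g : PowerSeries R) : PowerSeries R := subst1 f g

/-- A formal group law over `R`: a two-variable power series `F(X,Y)` with
`F(X,0) = X`, `F(0,Y) = Y`, `F(X,Y) = F(Y,X)` and `F(F(X,Y),Z) = F(X,F(Y,Z))`. -/
structure IsFGL (F : MvPowerSeries (Fin 2) R) : Prop where
  unit_left : subst2 F (MvPowerSeries.X 0) 0 = MvPowerSeries.X 0
  unit_right : subst2 F 0 (MvPowerSeries.X 1) = MvPowerSeries.X 1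
  comm : subst2 F (MvPowerSeries.X 1) (MvPowerSeries.X 0) = F
  assoc : subst2 F (subst2 F (MvPowerSeries.X 0) (MvPowerSeries.X 1))
        (MvPowerSeries.X 2 : MvPowerSeries (Fin 3) R)
      = subst2 F (MvPowerSeries.X 0) (subst2 F (MvPowerSeries.X 1) (MvPowerSeries.X 2))

/-- A homomorphism `f : F → G` of formal group laws: a one-variable power series with
zero constant term such that `f(F(X,Y)) = G(f(X), f(Y))`. -/
structure IsHom (F G : MvPowerSeries (Fin 2) R) (f : PowerSeries R) : Prop where
  const : PowerSeries.constantCoeff f = 0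
  hom : subst1 f F =
    subst2 G (subst1 f (MvPowerSeries.X 0)) (subst1 f (MvPowerSeries.X 1))

/-- The coefficientwise Frobenius twist `F^{(p)}`. -/
noncomputable def frob (p : ℕ) (F : MvPowerSeries (Fin 2) R) : MvPowerSeries (Fin 2) R :=
  fun d => (MvPowerSeries.coeff d F) ^ p

/-- The one-variable power series `F_Y(X,0)`, whose coefficient of `X^n` is the
coefficient of `X^n Y` in `F`. -/
noncomputable def FY0 (F : MvPowerSeries (Fin 2) R) : PowerSeries R :=
  PowerSeries.mk fun n =>
    MvPowerSeries.coeff (Finsupp.single 0 n + Finsupp.single 1 1) F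

/-- The formal partial derivative `F_X(X,Y)` with respect to the first variable. -/
noncomputable def FX (F : MvPowerSeries (Fin 2) R) : MvPowerSeries (Fin 2) R :=
  fun d => ((d 0 + 1 : ℕ) : R) * MvPowerSeries.coeff (d + Finsupp.single 0 1) F

/-- The `n`-series `[n]_F` of a formal group law, defined by `[0]_F = 0` and
`[n+1]_F(X) = F([n]_F(X), X)`. -/
noncomputable def nSeries (F : MvPowerSeries (Fin 2) R) : ℕ → PowerSeries R
  | 0 => 0
  | n + 1 => subst2 F (nSeries F n) PowerSeries.X

section

open MvPowerSeries Finset Finsupp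

variable {σ τ : Type*}

lemma coeff_pow_eq_zero {a : MvPowerSeries σ R} (ha : constantCoeff a = 0) {d : σ →₀ ℕ} {n : ℕ}
    (h : d.degree < n) : coeff d (a ^ n) = 0 :=
  coeff_of_lt_order <| (by exact_mod_cast h : (d.degree : ℕ∞) < n).trans_le
    (le_order_pow_of_constantCoeff_eq_zero n ha)

lemma coeff_pow_mul_pow_eq_zero {a b : MvPowerSeries σ R} (ha : constantCoeff a = 0)
    (hb : constantCoeff b = 0) {d : σ →₀ ℕ} {i j : ℕ} (h : d.degree < i + j) :
    coeff d (a ^ i * b ^ j) = 0 := by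
  refine coeff_of_lt_order (lt_of_lt_of_le ?_ le_order_mul)
  calc (d.degree : ℕ∞) < i + j := by exact_mod_cast h
    _ ≤ (a ^ i).order + (b ^ j).order := add_le_add
        (le_order_pow_of_constantCoeff_eq_zero i ha) (le_order_pow_of_constantCoeff_eq_zero j hb)

lemma coeff_mul_eq_of_coeff_eq {S T : MvPowerSeries σ R} {d : σ →₀ ℕ}
    (h : ∀ e ≤ d, coeff e S = coeff e T) (c : MvPowerSeries σ R) :
    coeff d (S * c) = coeff d (T * c) := by
  classical
  rw [coeff_mul, coeff_mul]
  refine sum_congr rfl fun uv huv => ?_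
  rw [h uv.1 (le_of_add_le_left (mem_antidiagonal.mp huv).le)]

lemma degree_embDomain (e : σ ↪ τ) (d : σ →₀ ℕ) : (embDomain e d).degree = d.degree := by
  rw [embDomain_eq_mapDomain, degree_mapDomain]

lemma coeff_subst1 (f : PowerSeries R) (G : MvPowerSeries σ R) (d : σ →₀ ℕ) :
    coeff d (subst1 f G) =
      ∑ n ∈ range (d.degree + 1), PowerSeries.coeff n f * coeff d (G ^ n) := rfl

lemma subst1_eq_subst (f : PowerSeries R) {G : MvPowerSeries σ R} (hG : constantCoeff G = 0) :
    subst1 f G = PowerSeries.subst G f := by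
  ext d
  rw [PowerSeries.coeff_subst (.of_constantCoeff_zero hG), coeff_subst1,
    finsum_eq_sum_of_support_subset (s := range (d.degree + 1))]
  · rfl
  · intro n hn
    by_contra hn'
    rw [Function.mem_support, coeff_pow_eq_zero hG (by simpa using hn'), smul_zero] at hn
    exact hn rfl

lemma subst1_X (f : PowerSeries R) : subst1 f PowerSeries.X = f := by
  rw [subst1_eq_subst _ PowerSeries.constantCoeff_X, PowerSeries.X_subst]

lemma subst1_zero (f : PowerSeries R) :
    subst1 f (0 : MvPowerSeries σ R) = C (PowerSeries.constantCoeff f) := by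
  rw [subst1_eq_subst _ (map_zero _), PowerSeries.subst_zero_eq_C_constantCoeff,
    Algebra.algebraMap_self, map_id]
  rfl

lemma subst1_C_mul (c : R) (f : PowerSeries R) (G : MvPowerSeries σ R) :
    subst1 (PowerSeries.C c * f) G = C c * subst1 f G := by
  ext d
  simp only [coeff_C_mul, coeff_subst1, PowerSeries.coeff_C_mul, Finset.mul_sum, mul_assoc]

lemma killCompl_subst1 (e : σ ↪ τ) (f : PowerSeries R) (G : MvPowerSeries τ R) :
    killCompl e (subst1 f G) = subst1 f (killCompl e G) := by
  ext d
  rw [coeff_killCompl, coeff_subst1, coeff_subst1, degree_embDomain]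
  simp only [← coeff_killCompl, map_pow]

lemma coeff_subst2 (G : MvPowerSeries (Fin 2) R) (a b : MvPowerSeries σ R) (d : σ →₀ ℕ) :
    coeff d (subst2 G a b) =
      ∑ ij ∈ range (d.degree + 1) ×ˢ range (d.degree + 1),
        coeff (single 0 ij.1 + single 1 ij.2) G * coeff d (a ^ ij.1 * b ^ ij.2) := rfl

lemma killCompl_subst2 (e : σ ↪ τ) (G : MvPowerSeries (Fin 2) R) (a b : MvPowerSeries τ R) :
    killCompl e (subst2 G a b) = subst2 G (killCompl e a) (killCompl e b) := by
  ext d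
  rw [coeff_killCompl, coeff_subst2, coeff_subst2, degree_embDomain]
  simp only [← coeff_killCompl, map_mul, map_pow]

lemma constantCoeff_subst2 {G : MvPowerSeries (Fin 2) R} (hG : constantCoeff G = 0)
    (a b : MvPowerSeries σ R) : constantCoeff (subst2 G a b) = 0 := by
  rw [← coeff_zero_eq_constantCoeff_apply, coeff_subst2]
  simp [coeff_zero_eq_constantCoeff_apply, hG]

lemma killCompl_punit_X (s : σ) : killCompl (R := R) (.punit s) (X s) = X () :=
  killCompl_X ()

/-- The variable of `R⟦X⟧` as the second variable `Y` of `R⟦X, Y⟧`; thus `killCompl embY G` is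
`G(0, X)`. -/
def embY : Unit ↪ Fin 2 := .punit 1

lemma coeff_killCompl_embY (G : MvPowerSeries (Fin 2) R) (n : ℕ) :
    PowerSeries.coeff n (killCompl embY G : PowerSeries R) = coeff (single 1 n) G := by
  rw [PowerSeries.coeff, coeff_killCompl, embDomain_single]
  rfl

lemma subst2_zero_left (G : MvPowerSeries (Fin 2) R) (h : MvPowerSeries σ R) :
    subst2 G 0 h = subst1 (killCompl embY G) h := by
  ext d
  rw [coeff_subst2, coeff_subst1, sum_product, sum_eq_single_of_mem 0 (by simp)]
  · simp [coeff_killCompl_embY]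
  · intro i _ hi
    simp [zero_pow hi]

lemma coeff_subst2_X_X (G : MvPowerSeries (Fin 2) R) {s t : σ} (hst : s ≠ t) (i j : ℕ) :
    coeff (single s i + single t j) (subst2 G (X s) (X t)) = coeff (single 0 i + single 1 j) G := by
  classical
  have hdeg : (single s i + single t j).degree = i + j := by simp
  rw [coeff_subst2, sum_eq_single_of_mem (i, j) (by simp [hdeg])]
  · simp [X_pow_eq, monomial_mul_monomial]
  · rintro ⟨k, l⟩ _ hkl
    rw [X_pow_eq, X_pow_eq, monomial_mul_monomial, coeff_monomial, if_neg, mul_zero]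
    intro h
    have hs := DFunLike.congr_fun h s
    have ht := DFunLike.congr_fun h t
    simp [hst, hst.symm] at hs ht
    exact hkl (Prod.ext hs.symm ht.symm)

lemma subst2_X_X (G : MvPowerSeries (Fin 2) R) : subst2 G (X 0) (X 1) = G := by
  ext d
  have hd : d = single 0 (d 0) + single 1 (d 1) := by
    ext k
    fin_cases k <;> simp
  rw [hd, coeff_subst2_X_X G (by decide)]

noncomputable def truncSubst2 (G : MvPowerSeries (Fin 2) R) (M N : ℕ) (a b : MvPowerSeries σ R) :
    MvPowerSeries σ R :=
  ∑ i ∈ range M, ∑ j ∈ range N, C (coeff (single 0 i + single 1 j) G) * (a ^ i * b ^ j)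

lemma coeff_subst2_eq_coeff_truncSubst2 (G : MvPowerSeries (Fin 2) R) {a b : MvPowerSeries σ R}
    (ha : constantCoeff a = 0) (hb : constantCoeff b = 0) {d : σ →₀ ℕ} {M N : ℕ}
    (hM : d.degree < M) (hN : d.degree < N) :
    coeff d (subst2 G a b) = coeff d (truncSubst2 G M N a b) := by
  rw [truncSubst2, ← sum_product', map_sum, coeff_subst2]
  simp only [coeff_C_mul]
  refine sum_subset (product_subset_product (range_subset_range.2 hM)
    (range_subset_range.2 hN)) fun ij _ hij => ?_
  have : d.degree < ij.1 + ij.2 := by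
    simp only [mem_product, mem_range, not_and_or, not_lt] at hij
    omega
  rw [coeff_pow_mul_pow_eq_zero ha hb this, mul_zero]

lemma coeff_FX_single_add_single (G : MvPowerSeries (Fin 2) R) (k j : ℕ) :
    coeff (single 0 k + single 1 j) (FX G) = (k + 1) * coeff (single 0 (k + 1) + single 1 j) G := by
  change ((_ + 1 : ℕ) : R) * coeff (single 0 k + single 1 j + single 0 1) G = _
  rw [add_right_comm, ← single_add]
  simp

lemma pderiv_truncSubst2 (G : MvPowerSeries (Fin 2) R) (M N : ℕ) (a : MvPowerSeries σ R)
    {b : MvPowerSeries σ R} {i : σ} (hb : pderiv R i b = 0) :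
    pderiv R i (truncSubst2 G (M + 1) N a b) = truncSubst2 (FX G) M N a b * pderiv R i a := by
  have hbj (j : ℕ) : pderiv R i (b ^ j) = 0 := by rw [pderiv_pow, hb, mul_zero]
  rw [truncSubst2, sum_range_succ', map_add, map_sum, truncSubst2, Finset.sum_mul]
  simp only [map_sum, Derivation.leibniz, pderiv_C, hbj, pow_zero, one_mul, smul_zero, add_zero,
    sum_const_zero, Finset.sum_mul]
  refine sum_congr rfl fun k _ => sum_congr rfl fun j _ => ?_
  simp only [pderiv_pow, coeff_FX_single_add_single, smul_eq_mul, map_mul, map_add, map_natCast,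
    map_one]
  push_cast
  ring

theorem pderiv_subst2 (G : MvPowerSeries (Fin 2) R) {a b : MvPowerSeries σ R}
    (ha : constantCoeff a = 0) (hb : constantCoeff b = 0) {i : σ} (hbi : pderiv R i b = 0) :
    pderiv R i (subst2 G a b) = subst2 (FX G) a b * pderiv R i a := by
  ext d
  set N := d.degree + 1
  have hdeg : (d + single i 1).degree < N + 1 := by simp [N]
  calc coeff d (pderiv R i (subst2 G a b))
      = coeff (d + single i 1) (truncSubst2 G (N + 1) (N + 1) a b) * (d i + 1) := by
        rw [coeff_pderiv, coeff_subst2_eq_coeff_truncSubst2 G ha hb hdeg hdeg]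
    _ = coeff d (truncSubst2 (FX G) N (N + 1) a b * pderiv R i a) := by
        rw [← coeff_pderiv, pderiv_truncSubst2 G _ _ _ hbi]
    _ = coeff d (subst2 (FX G) a b * pderiv R i a) := by
        refine coeff_mul_eq_of_coeff_eq (fun e he => ?_) _
        have := degree_mono he
        exact (coeff_subst2_eq_coeff_truncSubst2 _ ha hb (by omega) (by omega)).symm

namespace IsFGL

variable {F : MvPowerSeries (Fin 2) R} (hF : IsFGL F)
include hF

-- `hF.unit_right` is an identity in `R⟦X₀, X₁, X₂, …⟧`, whence the embedding into `ℕ`.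
lemma killCompl_embY : killCompl embY F = (PowerSeries.X : PowerSeries R) := by
  have h := congrArg (killCompl (R := R) (.punit (1 : ℕ))) hF.unit_right
  rwa [killCompl_subst2, map_zero, killCompl_punit_X, subst2_zero_left, ← PowerSeries.X.eq_def,
    subst1_X] at h

lemma constantCoeff_eq_zero : constantCoeff F = 0 := by
  rw [← coeff_zero_eq_constantCoeff_apply, ← single_zero (1 : Fin 2), ← coeff_killCompl_embY,
    hF.killCompl_embY, PowerSeries.coeff_X, if_neg zero_ne_one]

lemma constantCoeff_FY0 : PowerSeries.constantCoeff (FY0 F) = 1 := by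
  rw [← PowerSeries.coeff_zero_eq_constantCoeff_apply, FY0, PowerSeries.coeff_mk, single_zero,
    zero_add, ← coeff_killCompl_embY, hF.killCompl_embY, PowerSeries.coeff_one_X]

lemma coeff_comm (i j : ℕ) :
    coeff (single 0 i + single 1 j) F = coeff (single 0 j + single 1 i) F := by
  conv_lhs => rw [← hF.comm, add_comm, coeff_subst2_X_X F (by decide : (1 : Fin 2) ≠ 0)]

lemma subst2_zero_left_eq {h : MvPowerSeries σ R} (hh : constantCoeff h = 0) :
    subst2 F 0 h = h := by
  rw [subst2_zero_left, hF.killCompl_embY, subst1_eq_subst _ hh, PowerSeries.subst_X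
    (.of_constantCoeff_zero hh)]

lemma killCompl_embY_FX : killCompl embY (FX F) = FY0 F := by
  ext n
  rw [coeff_killCompl_embY, ← zero_add (single 1 n), ← single_zero 0,
    coeff_FX_single_add_single, hF.coeff_comm, FY0, PowerSeries.coeff_mk]
  simp

lemma subst2_FX_zero_left (h : MvPowerSeries σ R) :
    subst2 (FX F) 0 h = subst1 (FY0 F) h := by
  rw [subst2_zero_left, hF.killCompl_embY_FX]

theorem subst1_FY0 :
    subst1 (FY0 F) F = FX F * subst1 (FY0 F) (X 0 : MvPowerSeries (Fin 2) R) := by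
  have hF0 := hF.constantCoeff_eq_zero
  have hX (i : Fin 3) : constantCoeff (X i : MvPowerSeries (Fin 3) R) = 0 := constantCoeff_X i
  have hX0 {i : Fin 3} (hi : i ≠ 0) : pderiv R 0 (X i : MvPowerSeries (Fin 3) R) = 0 :=
    pderiv_X_of_ne hi
  have hB : pderiv R 0 (subst2 F (X 1) (X 2 : MvPowerSeries (Fin 3) R)) = 0 := by
    rw [pderiv_subst2 F (hX 1) (hX 2) (hX0 (by decide)), hX0 (by decide), mul_zero]
  have hassoc : subst2 (FX F) (subst2 F (X 0) (X 1)) (X 2) * subst2 (FX F) (X 0) (X 1) =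
      subst2 (FX F) (X 0) (subst2 F (X 1) (X 2 : MvPowerSeries (Fin 3) R)) := by
    have h := congrArg (pderiv R 0) hF.assoc
    rwa [pderiv_subst2 F (constantCoeff_subst2 hF0 _ _) (hX 2) (hX0 (by decide)),
      pderiv_subst2 F (hX 0) (hX 1) (hX0 (by decide)),
      pderiv_subst2 F (hX 0) (constantCoeff_subst2 hF0 _ _) hB, pderiv_X_self, mul_one,
      mul_one] at h
  have h := congrArg (killCompl (R := R) (Fin.succEmb 2)) hassoc
  have e0 : killCompl (Fin.succEmb 2) (X 0 : MvPowerSeries (Fin 3) R) = 0 :=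
    killCompl_X_eq_zero (by simp)
  have e1 : killCompl (Fin.succEmb 2) (X 1 : MvPowerSeries (Fin 3) R) = X 0 := killCompl_X 0
  have e2 : killCompl (Fin.succEmb 2) (X 2 : MvPowerSeries (Fin 3) R) = X 1 := killCompl_X 1
  simp only [map_mul, killCompl_subst2, e0, e1, e2] at h
  rwa [hF.subst2_zero_left_eq (constantCoeff_X 0), subst2_X_X, subst2_X_X,
    hF.subst2_FX_zero_left, hF.subst2_FX_zero_left, eq_comm] at h

end IsFGL

def IsInvariant (F : MvPowerSeries (Fin 2) R) (f : PowerSeries R) : Prop :=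
  subst1 f F * FX F = subst1 f (X 0 : MvPowerSeries (Fin 2) R)

variable {F : MvPowerSeries (Fin 2) R}

lemma IsInvariant.C_mul {f : PowerSeries R} (h : IsInvariant F f) (c : R) :
    IsInvariant F (PowerSeries.C c * f) := by
  rw [IsInvariant, subst1_C_mul, subst1_C_mul, mul_assoc, h]

lemma IsFGL.isInvariant_of_mul_eq_one (hF : IsFGL F) {ω : PowerSeries R} (hω : FY0 F * ω = 1) :
    IsInvariant F ω := by
  let φ := PowerSeries.substAlgHom (R := R) (.of_constantCoeff_zero hF.constantCoeff_eq_zero)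
  let ψ := PowerSeries.substAlgHom (R := R)
    (.of_constantCoeff_zero (constantCoeff_X (R := R) (0 : Fin 2)))
  have hφ (f : PowerSeries R) : subst1 f F = φ f := by
    rw [PowerSeries.coe_substAlgHom, subst1_eq_subst _ hF.constantCoeff_eq_zero]
  have hψ (f : PowerSeries R) : subst1 f (X 0 : MvPowerSeries (Fin 2) R) = ψ f := by
    rw [PowerSeries.coe_substAlgHom, subst1_eq_subst _ (constantCoeff_X _)]
  have key := hF.subst1_FY0
  have h1 := congrArg φ hω
  have h2 := congrArg ψ hω
  rw [map_mul, map_one] at h1 h2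
  rw [hφ, hψ] at key
  rw [IsInvariant, hφ, hψ]
  linear_combination (-(φ ω * FX F)) * h2 + ψ ω * h1 - (φ ω * ψ ω) * key

lemma IsFGL.mul_FY0_eq_of_isInvariant (hF : IsFGL F) {f : PowerSeries R} (h : IsInvariant F f) :
    f * FY0 F = PowerSeries.C (PowerSeries.constantCoeff f) := by
  have h := congrArg (killCompl (R := R) embY) h
  have h0 : killCompl embY (X 0 : MvPowerSeries (Fin 2) R) = 0 :=
    killCompl_X_eq_zero (by rintro ⟨⟨⟩, h⟩; exact absurd h (by decide))
  rwa [map_mul, killCompl_subst1, killCompl_subst1, hF.killCompl_embY, hF.killCompl_embY_FX, h0,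
    subst1_X, subst1_zero] at h

end

/-- For a formal group law `F` over a commutative ring `R`, the power series `F_Y(X,0)` has
constant term `1`, hence is invertible with inverse `ω_F`; and `f ∈ R[[X]]` satisfies the
invariance condition `f(F(X,Y)) · F_X(X,Y) = f(X)` if and only if `f = f(0) · ω_F`.  In
particular the invariant power series form a free `R`-module of rank one generated by `ω_F`. -/
theorem statement5 (R : Type*) [CommRing R]
    (F : MvPowerSeries (Fin 2) R) (hF : IsFGL F) :
    PowerSeries.constantCoeff (FY0 F) = 1 ∧
      ∃ ω : PowerSeries R, FY0 F * ω = 1 ∧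
        ∀ f : PowerSeries R,
          subst1 f F * FX F = subst1 f (MvPowerSeries.X 0 : MvPowerSeries (Fin 2) R) ↔
            f = PowerSeries.C (PowerSeries.constantCoeff f) * ω := by
  have hg := hF.constantCoeff_FY0
  obtain ⟨ω, hω⟩ :=
    (PowerSeries.isUnit_iff_constantCoeff.mpr (hg ▸ isUnit_one)).exists_right_inv
  refine ⟨hg, ω, hω, fun f => ⟨fun h => ?_, fun h => ?_⟩⟩
  · calc f = f * FY0 F * ω := by rw [mul_assoc, hω, mul_one]
      _ = PowerSeries.C (PowerSeries.constantCoeff f) * ω := by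
        rw [hF.mul_FY0_eq_of_isInvariant h]
  · rw [h]
    exact (hF.isInvariant_of_mul_eq_one hω).C_mul _

end FGL
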